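/- arXiv:2407.07103 — 8 statements merged into one kernel-verified Lean document; each statement's English description precedes it below -/
import Mathlib

section
/- Let p be an odd prime, let f(x,y) = a20*x^2 + a11*x*y + a02*y^2 + a10*x + a01*y + a00 be a polynomial with integer coefficients, let k ≥ 1 be an integer, and let b, c be integers with p^k ∣ f(b,c). Then the number of pairs (i,j) with 0 ≤ i ≤ p−1 and 0 ≤ j ≤ p−1 such that p^(k+1) ∣ f(b + p^k·i, c + p^k·j) is equal to 0, p, or p^2. -/
open Finset

lemma count_linear (p : ℕ) [Fact p.Prime] (m A B : ZMod p) :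
    (((Finset.univ : Finset (ZMod p × ZMod p))).filter
        (fun x => m + A * x.1 + B * x.2 = 0)).card = 0 ∨
    (((Finset.univ : Finset (ZMod p × ZMod p))).filter
        (fun x => m + A * x.1 + B * x.2 = 0)).card = p ∨
    (((Finset.univ : Finset (ZMod p × ZMod p))).filter
        (fun x => m + A * x.1 + B * x.2 = 0)).card = p ^ 2 := by
  by_cases hB : B ≠ 0
  · right; left
    have himg : ((Finset.univ : Finset (ZMod p × ZMod p))).filter
        (fun x => m + A * x.1 + B * x.2 = 0)
        = Finset.univ.image (fun i : ZMod p => (i, -B⁻¹ * (m + A * i))) := by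
      ext x
      simp only [mem_filter, mem_image, mem_univ, true_and]
      constructor
      · intro h
        refine ⟨x.1, Prod.ext rfl ?_⟩
        field_simp
        linear_combination -h
      · rintro ⟨i, rfl⟩
        field_simp
        ring
    rw [himg, Finset.card_image_of_injective _ (fun a b h => (Prod.ext_iff.mp h).1),
      Finset.card_univ, ZMod.card]
  · push_neg at hB
    subst hB
    by_cases hA : A ≠ 0
    · right; left
      have himg : ((Finset.univ : Finset (ZMod p × ZMod p))).filter
          (fun x => m + A * x.1 + 0 * x.2 = 0)
          = Finset.univ.image (fun j : ZMod p => (-A⁻¹ * m, j)) := by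
        ext x
        simp only [mem_filter, mem_image, mem_univ, true_and, zero_mul, add_zero]
        constructor
        · intro h
          refine ⟨x.2, Prod.ext ?_ rfl⟩
          simp only
          field_simp
          linear_combination -h
        · rintro ⟨j, rfl⟩
          field_simp
          ring
      rw [himg, Finset.card_image_of_injective _ (fun a b h => (Prod.ext_iff.mp h).2),
        Finset.card_univ, ZMod.card]
    · push_neg at hA
      subst hA
      by_cases hm : m = 0
      · right; right
        subst hm
        simp only [zero_mul, add_zero, zero_add]
        rw [Finset.filter_true_of_mem (by simp), Finset.card_univ]
        simp [ZMod.card, sq]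
      · left
        rw [Finset.card_eq_zero, Finset.filter_eq_empty_iff]
        intro x _
        simpa using hm

/-- The degree-2 splitting theorem (Theorem 3.1): for an odd prime `p`, the number of
children of a `*`-labelled vertex `(b, c)` of the `p`-adic valuation tree of the general
degree-2 bivariate polynomial that are again labelled `*` is `0`, `p`, or `p^2`. -/
theorem degree_two_splitting (p : ℕ) (hp : p.Prime) (hodd : Odd p)
    (a20 a11 a02 a10 a01 a00 : ℤ) (k : ℕ) (hk : 1 ≤ k) (b c : ℤ)
    (f : ℤ → ℤ → ℤ)
    (hf : ∀ x y : ℤ, f x y =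
      a20 * x ^ 2 + a11 * x * y + a02 * y ^ 2 + a10 * x + a01 * y + a00)
    (hdiv : (p : ℤ) ^ k ∣ f b c) :
    ((Finset.range p ×ˢ Finset.range p).filter
        (fun ij : ℕ × ℕ =>
          (p : ℤ) ^ (k + 1) ∣ f (b + (p : ℤ) ^ k * ij.1) (c + (p : ℤ) ^ k * ij.2))).card = 0 ∨
    ((Finset.range p ×ˢ Finset.range p).filter
        (fun ij : ℕ × ℕ =>
          (p : ℤ) ^ (k + 1) ∣ f (b + (p : ℤ) ^ k * ij.1) (c + (p : ℤ) ^ k * ij.2))).card = p ∨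
    ((Finset.range p ×ˢ Finset.range p).filter
        (fun ij : ℕ × ℕ =>
          (p : ℤ) ^ (k + 1) ∣ f (b + (p : ℤ) ^ k * ij.1) (c + (p : ℤ) ^ k * ij.2))).card = p ^ 2 := by
  haveI : Fact p.Prime := ⟨hp⟩
  obtain ⟨m, hm⟩ := hdiv
  set A : ℤ := 2 * a20 * b + a11 * c + a10 with hA
  set B : ℤ := a11 * b + 2 * a02 * c + a01 with hB
  have hp0 : (p : ℤ) ≠ 0 := by exact_mod_cast hp.ne_zero
  -- the key algebraic expansion
  have key : ∀ i j : ℤ, f (b + (p : ℤ) ^ k * i) (c + (p : ℤ) ^ k * j)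
      = (p : ℤ) ^ k * (m + A * i + B * j
        + (p : ℤ) ^ k * (a20 * i ^ 2 + a11 * i * j + a02 * j ^ 2)) := by
    intro i j
    rw [hf]
    linear_combination hm - hf b c
  -- reduce the divisibility condition to a condition mod p
  have cond : ∀ i j : ℤ, ((p : ℤ) ^ (k + 1) ∣ f (b + (p : ℤ) ^ k * i) (c + (p : ℤ) ^ k * j))
      ↔ (p : ℤ) ∣ m + A * i + B * j := by
    intro i j
    rw [key, pow_succ, mul_dvd_mul_iff_left (pow_ne_zero k hp0)]
    have hpq : (p : ℤ) ∣ (p : ℤ) ^ k * (a20 * i ^ 2 + a11 * i * j + a02 * j ^ 2) :=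
      (dvd_pow_self (p : ℤ) (by omega)).mul_right _
    exact dvd_add_left hpq
  -- transfer the count to `ZMod p`
  have hcard : ((Finset.range p ×ˢ Finset.range p).filter
        (fun ij : ℕ × ℕ =>
          (p : ℤ) ^ (k + 1) ∣ f (b + (p : ℤ) ^ k * ij.1) (c + (p : ℤ) ^ k * ij.2))).card
      = (((Finset.univ : Finset (ZMod p × ZMod p))).filter
        (fun x => (m : ZMod p) + (A : ZMod p) * x.1 + (B : ZMod p) * x.2 = 0)).card := by
    refine Finset.card_bij (fun ij _ => ((ij.1 : ZMod p), (ij.2 : ZMod p))) ?_ ?_ ?_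
    · rintro ⟨i, j⟩ hij
      simp only [mem_filter, mem_product, mem_range] at hij
      obtain ⟨⟨hi, hj⟩, hd⟩ := hij
      rw [cond] at hd
      simp only [mem_filter, mem_univ, true_and]
      have := (ZMod.intCast_zmod_eq_zero_iff_dvd (m + A * i + B * j) p).mpr hd
      push_cast at this ⊢
      linear_combination this
    · rintro ⟨i, j⟩ hij ⟨i', j'⟩ hij' h
      simp only [mem_filter, mem_product, mem_range] at hij hij'
      obtain ⟨h1, h2⟩ := Prod.ext_iff.mp h
      simp only at h1 h2
      have hi : i = i' := by
        have := congrArg ZMod.val h1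
        rwa [ZMod.val_cast_of_lt hij.1.1, ZMod.val_cast_of_lt hij'.1.1] at this
      have hj : j = j' := by
        have := congrArg ZMod.val h2
        rwa [ZMod.val_cast_of_lt hij.1.2, ZMod.val_cast_of_lt hij'.1.2] at this
      exact Prod.ext hi hj
    · intro x hx
      simp only [mem_filter, mem_univ, true_and] at hx
      refine ⟨(x.1.val, x.2.val), ?_, ?_⟩
      · simp only [mem_filter, mem_product, mem_range]
        refine ⟨⟨ZMod.val_lt x.1, ZMod.val_lt x.2⟩, ?_⟩
        rw [cond]
        rw [← ZMod.intCast_zmod_eq_zero_iff_dvd]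
        push_cast
        simp only [ZMod.natCast_val, ZMod.intCast_cast, ZMod.cast_id', id_eq]
        linear_combination hx
      · simp [ZMod.natCast_val]
  rw [hcard]
  exact count_linear p _ _ _
end

section
/- Let f be a polynomial in two variables with integer coefficients, with formal partial derivatives fx and fy. Let p be a prime, k ≥ 1 an integer, and b, c integers such that p^k divides f(b,c) and such that p does not divide fx(b,c) or p does not divide fy(b,c). Then the number of pairs (i,j) with 0 ≤ i ≤ p−1 and 0 ≤ j ≤ p−1 such that p^(k+1) divides f(b + p^k·i, c + p^k·j) is exactly p. -/
/-!
Expanding `f` to first order, `f(b + p^k i, c + p^k j) ≡ f(b, c) + p^k (i f_x + j f_y)` modulo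
`p^(2k)`, and `2k ≥ k + 1`. So, writing `f(b, c) = p^k m`, the child `(i, j)` is labelled `*`
exactly when `m + i f_x + j f_y ≡ 0 (mod p)`. Since `(f_x, f_y) ≢ (0, 0)`, this is an affine
line in `𝔽_p²`, which has `p` points.
-/

open MvPolynomial Finset

namespace MvPolynomial

variable {R σ : Type*} [CommRing R] [Fintype σ]

theorem sq_dvd_eval_add_sub_sum_pderiv {q : R} (x h : σ → R) (hh : ∀ i, q ∣ h i)
    (f : MvPolynomial σ R) :
    q ^ 2 ∣ eval (x + h) f - eval x f - ∑ i, h i * eval x (pderiv i f) := by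
  classical
  rw [sq]
  induction f using MvPolynomial.induction_on with
  | C a => simp
  | add f g hf hg =>
    convert dvd_add hf hg using 1
    simp only [map_add, mul_add, sum_add_distrib]
    ring
  | mul_X f i hf =>
    set L := ∑ j, h j * eval x (pderiv j f)
    have hL : q ∣ L := dvd_sum fun j _ => (hh j).mul_right _
    have hsum : ∑ j, h j * eval x (pderiv j (f * X i)) = x i * L + h i * eval x f := by
      simp only [L, pderiv_mul, pderiv_X, map_add, map_mul, eval_X, mul_add, sum_add_distrib,
        mul_sum]
      congr 1
      · exact sum_congr rfl fun j _ => by ring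
      · simp [Pi.single_apply, mul_comm]
    have hexp : eval (x + h) (f * X i) - eval x (f * X i) - ∑ j, h j * eval x (pderiv j (f * X i))
        = (eval (x + h) f - eval x f - L) * x i
          + h i * ((eval (x + h) f - eval x f - L) + L) := by
      rw [hsum]
      simp only [map_mul, eval_X, Pi.add_apply]
      ring
    rw [hexp]
    exact dvd_add (hf.mul_right _)
      (mul_dvd_mul (hh i) (dvd_add ((dvd_mul_right q q).trans hf) hL))

theorem pow_succ_dvd_eval_add_pow_smul_iff [IsDomain R] {p : R} (hp : p ≠ 0) {k : ℕ}
    (hk : 1 ≤ k) {f : MvPolynomial σ R} {x : σ → R} {m : R} (hm : eval x f = p ^ k * m)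
    (d : σ → R) :
    p ^ (k + 1) ∣ eval (x + p ^ k • d) f ↔ p ∣ m + ∑ i, d i * eval x (pderiv i f) := by
  have htaylor := sq_dvd_eval_add_sub_sum_pderiv x (p ^ k • d)
    (fun i => dvd_mul_right (p ^ k) (d i)) f
  have hquad : p ^ (k + 1) ∣ (p ^ k) ^ 2 := by
    rw [← pow_mul]
    exact pow_dvd_pow p (by omega)
  have hsplit : eval (x + p ^ k • d) f = p ^ k * (m + ∑ i, d i * eval x (pderiv i f))
      + (eval (x + p ^ k • d) f - eval x f - ∑ i, (p ^ k • d) i * eval x (pderiv i f)) := by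
    simp only [hm, Pi.smul_apply, smul_eq_mul, mul_add, mul_sum, mul_assoc]
    ring
  rw [hsplit, dvd_add_left (hquad.trans htaylor), pow_succ, mul_dvd_mul_iff_left (pow_ne_zero k hp)]

end MvPolynomial

theorem card_filter_add_mul_add_mul_eq_zero_of_ne_zero {F : Type*} [Field F] [Fintype F]
    [DecidableEq F] (a u : F) {v : F} (hv : v ≠ 0) :
    #{z : F × F | a + z.1 * u + z.2 * v = 0} = Fintype.card F := by
  symm
  refine card_nbij' (fun x => (x, -(a + x * u) / v)) Prod.fst (by simp [field]) (by simp)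
    (fun _ _ => rfl) ?_
  rintro ⟨x, y⟩ hxy
  simp only [coe_filter, mem_univ, true_and, Set.mem_ofPred_eq] at hxy
  simp only [Prod.mk.injEq, true_and]
  field_simp
  linear_combination -hxy

theorem card_filter_add_mul_add_mul_eq_zero {F : Type*} [Field F] [Fintype F]
    [DecidableEq F] (a u v : F) (huv : u ≠ 0 ∨ v ≠ 0) :
    #{z : F × F | a + z.1 * u + z.2 * v = 0} = Fintype.card F := by
  rcases huv with hu | hv
  · rw [← card_filter_add_mul_add_mul_eq_zero_of_ne_zero a v hu]
    exact card_equiv (Equiv.prodComm F F) fun z => by simp [add_right_comm]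
  · exact card_filter_add_mul_add_mul_eq_zero_of_ne_zero a u hv

theorem card_filter_range_prod_range_eq_card_filter_zmod {n : ℕ} [NeZero n]
    (P : ZMod n × ZMod n → Prop) [DecidablePred P] :
    #{ij ∈ range n ×ˢ range n | P (ij.1, ij.2)} = #{z : ZMod n × ZMod n | P z} := by
  refine card_nbij' (fun ij => (ij.1, ij.2)) (fun z => (z.1.val, z.2.val)) ?_ ?_ ?_ ?_
  · intro ij hij
    simp_all
  · intro z hz
    simp_all [ZMod.val_lt]
  · intro ij hij
    simp_all [Nat.mod_eq_of_lt]
  · intro z _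
    simp

/-- The nondegenerate case: when at least one formal partial derivative of `f` is a
`p`-adic unit at `(b, c)`, exactly `p` of the `p^2` children of the vertex `(b, c)` in
the `p`-adic valuation tree are labelled `*`. -/
theorem nondegenerate_splitting (f : MvPolynomial (Fin 2) ℤ) (p : ℕ) (hp : p.Prime)
    (k : ℕ) (hk : 1 ≤ k) (b c : ℤ)
    (hdiv : (p : ℤ) ^ k ∣ MvPolynomial.eval ![b, c] f)
    (hunit : ¬ (p : ℤ) ∣ MvPolynomial.eval ![b, c] (MvPolynomial.pderiv 0 f) ∨
             ¬ (p : ℤ) ∣ MvPolynomial.eval ![b, c] (MvPolynomial.pderiv 1 f)) :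
    ((Finset.range p ×ˢ Finset.range p).filter
        (fun ij : ℕ × ℕ => (p : ℤ) ^ (k + 1) ∣
          MvPolynomial.eval ![b + (p : ℤ) ^ k * ij.1, c + (p : ℤ) ^ k * ij.2] f)).card = p := by
  have := Fact.mk hp
  obtain ⟨m, hm⟩ := hdiv
  set fx := eval ![b, c] (pderiv 0 f)
  set fy := eval ![b, c] (pderiv 1 f)
  have hchild (ij : ℕ × ℕ) :
      (p : ℤ) ^ (k + 1) ∣ eval ![b + p ^ k * ij.1, c + p ^ k * ij.2] f ↔
        (m : ZMod p) + ij.1 * fx + ij.2 * fy = 0 := by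
    have hshift : ![b + p ^ k * ij.1, c + p ^ k * ij.2] =
        ![b, c] + (p : ℤ) ^ k • ![(ij.1 : ℤ), ij.2] := by
      ext i; fin_cases i <;> simp
    rw [hshift, pow_succ_dvd_eval_add_pow_smul_iff (by exact_mod_cast hp.ne_zero) hk hm,
      ← ZMod.intCast_zmod_eq_zero_iff_dvd]
    simp [Fin.sum_univ_two, fx, fy, add_assoc]
  rw [filter_congr fun ij _ => hchild ij,
    card_filter_range_prod_range_eq_card_filter_zmod
      (fun z : ZMod p × ZMod p => (m : ZMod p) + z.1 * fx + z.2 * fy = 0),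
    card_filter_add_mul_add_mul_eq_zero, ZMod.card]
  simpa only [ne_eq, ZMod.intCast_zmod_eq_zero_iff_dvd] using hunit
end

section
/- Let p be a prime and let f(x,y) = a20*x^2 + a11*x*y + a02*y^2 + a10*x + a01*y + a00 have integer coefficients with p not dividing a10 or p not dividing a01. Let k ≥ 1 and let b, c be integers with p ∣ b, p ∣ c, and p^k ∣ f(b,c). Then the number of pairs (i,j) with 0 ≤ i ≤ p−1 and 0 ≤ j ≤ p−1 such that p^(k+1) divides f(b + p^k·i, c + p^k·j) is exactly p. -/
/-!
Writing `f (b + p^k i, c + p^k j)` as a Taylor expansion around `(b, c)`, the quadratic terms are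
divisible by `p^(2k)` and the cross terms `(2 a20 b + a11 c) p^k i`, `(a11 b + 2 a02 c) p^k j` by
`p^(k+1)`, because `p ∣ b` and `p ∣ c`. So if `f b c = p^k m`, the child `(i, j)` is labelled `*`
exactly when `m + a10 i + a01 j ≡ 0 (mod p)`. As one of `a10`, `a01` is a unit mod `p`, this
linear congruence has one solution in that variable for each value of the other one: `p` in all.
-/

open Finset

theorem quadratic_shift_modEq (p : ℤ) (a20 a11 a02 a10 a01 a00 : ℤ) {k : ℕ} (hk : 1 ≤ k)
    {b c : ℤ} (hb : p ∣ b) (hc : p ∣ c) (i j : ℤ) :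
    a20 * (b + p ^ k * i) ^ 2 + a11 * (b + p ^ k * i) * (c + p ^ k * j)
        + a02 * (c + p ^ k * j) ^ 2 + a10 * (b + p ^ k * i) + a01 * (c + p ^ k * j) + a00
      ≡ a20 * b ^ 2 + a11 * b * c + a02 * c ^ 2 + a10 * b + a01 * c + a00
        + p ^ k * (a10 * i + a01 * j) [ZMOD p ^ (k + 1)] := by
  obtain ⟨b', rfl⟩ := hb
  obtain ⟨c', rfl⟩ := hc
  obtain ⟨n, rfl⟩ := Nat.exists_eq_add_of_le' hk
  rw [Int.modEq_iff_dvd]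
  exact ⟨-(a20 * (2 * b' * i + p ^ n * i ^ 2) + a11 * (b' * j + c' * i + p ^ n * (i * j))
      + a02 * (2 * c' * j + p ^ n * j ^ 2)), by ring⟩

theorem card_filter_range_dvd_add_mul {p : ℕ} (hp : p.Prime) (N B : ℤ) (hB : ¬ (p : ℤ) ∣ B) :
    ((range p).filter fun j : ℕ => (p : ℤ) ∣ N + B * j).card = 1 := by
  have : Fact p.Prime := ⟨hp⟩
  have hB' : (B : ZMod p) ≠ 0 := by rwa [Ne, ZMod.intCast_zmod_eq_zero_iff_dvd]
  set z : ZMod p := -N * (B : ZMod p)⁻¹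
  have hsol : ∀ j : ℕ, (p : ℤ) ∣ N + B * j ↔ (j : ZMod p) = z := by
    intro j
    rw [← ZMod.intCast_zmod_eq_zero_iff_dvd]
    push_cast
    constructor
    · intro h
      simp only [z]
      field_simp
      linear_combination h
    · intro h
      simp only [h, z]
      field_simp
      ring
  rw [card_eq_one]
  refine ⟨z.val, eq_singleton_iff_unique_mem.mpr ⟨?_, ?_⟩⟩
  · exact mem_filter.mpr
      ⟨mem_range.mpr (ZMod.val_lt z), (hsol _).mpr (ZMod.natCast_zmod_val z)⟩
  · intro j hj
    rw [mem_filter, mem_range, hsol] at hj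
    rw [← hj.2, ZMod.val_natCast_of_lt hj.1]

theorem card_filter_range_prod_dvd_linear {p : ℕ} (hp : p.Prime) (M A B : ℤ)
    (hAB : ¬ (p : ℤ) ∣ A ∨ ¬ (p : ℤ) ∣ B) :
    ((range p ×ˢ range p).filter fun ij : ℕ × ℕ => (p : ℤ) ∣ M + A * ij.1 + B * ij.2).card
      = p := by
  rw [card_filter]
  rcases hAB with hA | hB
  · rw [sum_product_right]
    calc ∑ j ∈ range p, ∑ i ∈ range p, (if (p : ℤ) ∣ M + A * i + B * j then 1 else 0)
        = ∑ j ∈ range p, ((range p).filter fun i : ℕ => (p : ℤ) ∣ M + B * j + A * i).card := by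
          simp only [card_filter, add_right_comm]
      _ = p := by simp [card_filter_range_dvd_add_mul hp _ A hA]
  · rw [sum_product]
    simp only [← card_filter, card_filter_range_dvd_add_mul hp _ B hB]
    simp

/-- Case 1 of the proof of Theorem 3.1: when `(b, c) ≡ (0, 0) (mod p)` and at least one
of the linear coefficients `a10`, `a01` is a unit mod `p`, exactly `p` of the `p^2`
children of the vertex `(b, c)` in the `p`-adic valuation tree are labelled `*`. -/
theorem degree_two_case_one (p : ℕ) (hp : p.Prime)
    (a20 a11 a02 a10 a01 a00 : ℤ)
    (hlin : ¬ (p : ℤ) ∣ a10 ∨ ¬ (p : ℤ) ∣ a01)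
    (k : ℕ) (hk : 1 ≤ k) (b c : ℤ)
    (hb : (p : ℤ) ∣ b) (hc : (p : ℤ) ∣ c)
    (f : ℤ → ℤ → ℤ)
    (hf : ∀ x y : ℤ, f x y =
      a20 * x ^ 2 + a11 * x * y + a02 * y ^ 2 + a10 * x + a01 * y + a00)
    (hdiv : (p : ℤ) ^ k ∣ f b c) :
    ((Finset.range p ×ˢ Finset.range p).filter
        (fun ij : ℕ × ℕ =>
          (p : ℤ) ^ (k + 1) ∣ f (b + (p : ℤ) ^ k * ij.1) (c + (p : ℤ) ^ k * ij.2))).card = p := by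
  obtain ⟨m, hm⟩ := hdiv
  have hpk : (p : ℤ) ^ k ≠ 0 := pow_ne_zero _ (Int.natCast_ne_zero.mpr hp.ne_zero)
  have hstar : ∀ i j : ℤ, (p : ℤ) ^ (k + 1) ∣ f (b + p ^ k * i) (c + p ^ k * j)
      ↔ (p : ℤ) ∣ m + a10 * i + a01 * j := by
    intro i j
    rw [hf, (quadratic_shift_modEq p a20 a11 a02 a10 a01 a00 hk hb hc i j).dvd_iff, ← hf, hm,
      ← mul_add, pow_succ, mul_dvd_mul_iff_left hpk, add_assoc]
  simp only [hstar]
  exact card_filter_range_prod_dvd_linear hp m a10 a01 hlin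
end

section
/- For all integers x and y, the 2-adic valuation of x^2 + y^2 + x·y + x + y + 1 equals 1 if both x and y are odd, and equals 0 otherwise. -/
lemma padicValInt_two_two : padicValInt 2 (2 : ℤ) = 1 := by
  have := padicValInt.self (p := 2) one_lt_two
  simpa using this

/-- Example 2 of the paper: the 2-adic valuation of `x^2 + y^2 + xy + x + y + 1` is `1`
if both `x` and `y` are odd, and `0` otherwise. -/
theorem valuation_quadratic_two_vars (x y : ℤ) :
    (Odd x ∧ Odd y →
      padicValInt 2 (x ^ 2 + y ^ 2 + x * y + x + y + 1) = 1) ∧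
    (¬ (Odd x ∧ Odd y) →
      padicValInt 2 (x ^ 2 + y ^ 2 + x * y + x + y + 1) = 0) := by
  constructor
  · rintro ⟨⟨a, ha⟩, ⟨b, hb⟩⟩
    subst ha hb
    have key : (2*a+1) ^ 2 + (2*b+1) ^ 2 + (2*a+1) * (2*b+1) + (2*a+1) + (2*b+1) + 1
        = 2 * (2 * (a^2 + b^2 + a*b + 2*a + 2*b + 1) + 1) := by ring
    rw [key]
    set m : ℤ := a^2 + b^2 + a*b + 2*a + 2*b + 1 with hm
    have hne : (2*m+1 : ℤ) ≠ 0 := by omega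
    rw [padicValInt.mul (by norm_num) hne, padicValInt_two_two,
      padicValInt.eq_zero_of_not_dvd]
    intro ⟨c, hc⟩
    push_cast at hc
    omega
  · intro h
    apply padicValInt.eq_zero_of_not_dvd
    intro ⟨c, hc⟩
    push_cast at hc
    rcases Int.even_or_odd x with ⟨a, ha⟩ | ⟨a, ha⟩ <;>
      rcases Int.even_or_odd y with ⟨b, hb⟩ | ⟨b, hb⟩ <;> subst ha hb
    · have key : (a+a) ^ 2 + (b+b) ^ 2 + (a+a) * (b+b) + (a+a) + (b+b) + 1
          = 2 * (2*a^2 + 2*b^2 + 2*a*b + a + b) + 1 := by ring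
      set m : ℤ := 2*a^2 + 2*b^2 + 2*a*b + a + b
      omega
    · have key : (a+a) ^ 2 + (2*b+1) ^ 2 + (a+a) * (2*b+1) + (a+a) + (2*b+1) + 1
          = 2 * (2*a^2 + 2*b^2 + 2*a*b + 2*a + 3*b + 1) + 1 := by ring
      set m : ℤ := 2*a^2 + 2*b^2 + 2*a*b + 2*a + 3*b + 1
      omega
    · have key : (2*a+1) ^ 2 + (b+b) ^ 2 + (2*a+1) * (b+b) + (2*a+1) + (b+b) + 1
          = 2 * (2*a^2 + 2*b^2 + 2*a*b + 3*a + 2*b + 1) + 1 := by ring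
      set m : ℤ := 2*a^2 + 2*b^2 + 2*a*b + 3*a + 2*b + 1
      omega
    · exact h ⟨⟨a, rfl⟩, ⟨b, rfl⟩⟩
end

section
/- Let k ≥ 2 be an integer and let j be an odd integer with 2^(k+1) ∣ j^2 + 7. Then exactly one i ∈ {0, 1} satisfies 2^(k+2) ∣ (j + 2^k·i)^2 + 7; moreover, for the other value of i, the 2-adic valuation of (j + 2^k·i + 2^(k+1)·t)^2 + 7 equals k+1 for every integer t. -/
lemma padicValInt_two_pow_mul_odd (n : ℕ) (u : ℤ) (hu : Odd u) :
    padicValInt 2 (2 ^ n * u) = n := by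
  have hu0 : u ≠ 0 := by rintro rfl; simp [Int.odd_iff] at hu
  unfold padicValInt
  have habs : ((2 : ℤ) ^ n * u).natAbs = 2 ^ n * u.natAbs := by
    rw [Int.natAbs_mul, Int.natAbs_pow]; rfl
  rw [habs]
  have h2 : ¬ (2 : ℕ) ∣ u.natAbs := by
    rw [Nat.two_dvd_ne_zero, ← Nat.odd_iff]
    exact Int.natAbs_odd.mpr hu
  rw [padicValNat.mul (by positivity) (by simpa using hu0),
    padicValNat.prime_pow, padicValNat.eq_zero_of_not_dvd h2]
  rfl

/-- The splitting theorem for the 2-adic valuation tree of `n^2 + 7`: a non-terminating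
vertex `j` at level `k+1` splits into two children, exactly one of which is again
non-terminating, while the other is terminal with constant valuation `k+1`. -/
theorem n_sq_add_seven_splitting (k : ℕ) (hk : 2 ≤ k) (j : ℤ) (hj : Odd j)
    (hdiv : (2 : ℤ) ^ (k + 1) ∣ j ^ 2 + 7) :
    (∃! i : ℤ, i ∈ ({0, 1} : Set ℤ) ∧
      (2 : ℤ) ^ (k + 2) ∣ (j + 2 ^ k * i) ^ 2 + 7) ∧
    (∀ i ∈ ({0, 1} : Set ℤ),
      ¬ (2 : ℤ) ^ (k + 2) ∣ (j + 2 ^ k * i) ^ 2 + 7 →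
      ∀ t : ℤ, padicValInt 2 ((j + 2 ^ k * i + 2 ^ (k + 1) * t) ^ 2 + 7) = k + 1) := by
  obtain ⟨k', rfl⟩ : ∃ k', k = k' + 2 := ⟨k - 2, by omega⟩
  obtain ⟨m, hm⟩ := hdiv
  -- key identity
  have key : ∀ i : ℤ, (j + 2 ^ (k' + 2) * i) ^ 2 + 7
      = 2 ^ (k' + 3) * (m + i * j + 2 ^ (k' + 1) * i ^ 2) := by
    intro i
    have : (j + 2 ^ (k' + 2) * i) ^ 2 + 7
        = (j ^ 2 + 7) + 2 ^ (k' + 3) * (i * j) + 2 ^ (k' + 3) * (2 ^ (k' + 1) * i ^ 2) := by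
      ring
    rw [this, hm]; ring
  have hdvd_iff : ∀ i : ℤ, ((2 : ℤ) ^ (k' + 2 + 2) ∣ (j + 2 ^ (k' + 2) * i) ^ 2 + 7)
      ↔ (2 : ℤ) ∣ (m + i * j + 2 ^ (k' + 1) * i ^ 2) := by
    intro i
    rw [key i, show k' + 2 + 2 = (k' + 3) + 1 by omega, pow_succ]
    constructor
    · rintro ⟨c, hc⟩
      exact ⟨c, by
        have h3 : (2:ℤ)^(k'+3) ≠ 0 := by positivity
        refine mul_left_cancel₀ h3 ?_
        linarith [hc]⟩
    · rintro ⟨c, hc⟩; exact ⟨c, by rw [hc]; ring⟩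
  obtain ⟨a, ha⟩ := hj
  have hpar : ∀ i : ℤ, i ∈ ({0,1} : Set ℤ) →
      ((2 : ℤ) ∣ (m + i * j + 2 ^ (k' + 1) * i ^ 2) ↔ (2 : ℤ) ∣ (m + i)) := by
    intro i hi
    simp only [Set.mem_insert_iff, Set.mem_singleton_iff] at hi
    have he : (2:ℤ) ^ (k' + 1) = 2 * 2 ^ k' := by ring
    rcases hi with rfl | rfl
    · norm_num
    · rw [ha, he]
      ring_nf
      generalize (2:ℤ) ^ k' = p
      omega
  constructor
  · rcases Int.even_or_odd m with hme | hmo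
    · rw [Int.even_iff] at hme
      refine ⟨0, ⟨by simp, ?_⟩, ?_⟩
      · rw [hdvd_iff, hpar 0 (by simp)]; omega
      · rintro i ⟨hi, hd⟩
        rw [hdvd_iff, hpar i hi] at hd
        simp only [Set.mem_insert_iff, Set.mem_singleton_iff] at hi
        rcases hi with rfl | rfl
        · rfl
        · exfalso; omega
    · rw [Int.odd_iff] at hmo
      refine ⟨1, ⟨by simp, ?_⟩, ?_⟩
      · rw [hdvd_iff, hpar 1 (by simp)]; omega
      · rintro i ⟨hi, hd⟩
        rw [hdvd_iff, hpar i hi] at hd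
        simp only [Set.mem_insert_iff, Set.mem_singleton_iff] at hi
        rcases hi with rfl | rfl
        · exfalso; omega
        · rfl
  · intro i hi hnd t
    rw [hdvd_iff] at hnd
    set u := m + i * j + 2 ^ (k' + 1) * i ^ 2 with hu
    have hid : (j + 2 ^ (k' + 2) * i + 2 ^ (k' + 2 + 1) * t) ^ 2 + 7
        = 2 ^ (k' + 3) * (u + 2 * ((j + 2 ^ (k' + 2) * i) * t) + 2 ^ (k' + 3) * t ^ 2) := by
      have : (j + 2 ^ (k' + 2) * i + 2 ^ (k' + 2 + 1) * t) ^ 2 + 7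
          = ((j + 2 ^ (k' + 2) * i) ^ 2 + 7)
            + 2 ^ (k' + 3) * (2 * ((j + 2 ^ (k' + 2) * i) * t) + 2 ^ (k' + 3) * t ^ 2) := by
        ring
      rw [this, key i]; ring
    rw [hid, padicValInt_two_pow_mul_odd]
    have hou : Odd u := by rw [Int.odd_iff]; omega
    obtain ⟨b, hb⟩ := hou
    exact ⟨b + (j + 2 ^ (k' + 2) * i) * t + 2 ^ (k' + 2) * t ^ 2, by rw [hb]; ring⟩
end

section
/- For every integer n ≥ 4, the 2-adic valuation of 4^n − 4·3^n + 6·2^n − 4 equals 3 if n is even and equals 4 if n is odd. -/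
/-!
For `n ≥ 4` both `4^n` and `6·2^n` are divisible by `32`, so modulo `32` the number is
`-4·3^n - 4`. As `3^n ≡ 1` or `3 [ZMOD 8]` according as `n` is even or odd, it is congruent to
`-8 ≡ 2^3 [ZMOD 2^4]`, resp. to `-16 ≡ 2^4 [ZMOD 2^5]`, and such a congruence pins down the
2-adic valuation.
-/

theorem padicValInt_eq_of_modEq_prime_pow {p : ℕ} [hp : Fact p.Prime] {N : ℤ} {k : ℕ}
    (h : N ≡ p ^ k [ZMOD p ^ (k + 1)]) : padicValInt p N = k := by
  have hp' : Prime (p : ℤ) := Nat.prime_iff_prime_int.mp hp.out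
  have hsub : (p : ℤ) ^ (k + 1) ∣ N - p ^ k := h.symm.dvd
  have hndvd : ¬ (p : ℤ) ^ (k + 1) ∣ N := fun hN ↦ by
    have : (p : ℤ) ^ (k + 1) ∣ p ^ k := by simpa using dvd_sub hN hsub
    simp [pow_dvd_pow_iff hp'.ne_zero hp'.not_isUnit] at this
  have hdvd : (p : ℤ) ^ k ∣ N := by
    simpa using dvd_add ((pow_dvd_pow (p : ℤ) k.le_succ).trans hsub) (dvd_refl _)
  have hN : N ≠ 0 := by rintro rfl; exact hndvd (dvd_zero _)
  have hle := ((padicValInt_dvd_iff k N).1 hdvd).resolve_left hN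
  have hlt : ¬ k + 1 ≤ padicValInt p N := fun hk ↦ hndvd ((padicValInt_dvd_iff _ N).2 (.inr hk))
  omega

theorem Int.three_pow_modEq_one_of_even {n : ℕ} (hn : Even n) : (3 : ℤ) ^ n ≡ 1 [ZMOD 8] := by
  obtain ⟨m, rfl⟩ := hn
  rw [← two_mul, pow_mul]
  simpa using (show (3 : ℤ) ^ 2 ≡ 1 [ZMOD 8] by decide).pow m

theorem Int.three_pow_modEq_three_of_odd {n : ℕ} (hn : Odd n) : (3 : ℤ) ^ n ≡ 3 [ZMOD 8] := by
  obtain ⟨m, rfl⟩ := hn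
  rw [pow_succ]
  simpa using (Int.three_pow_modEq_one_of_even (even_two_mul m)).mul_right 3

theorem twentyFour_mul_stirling_four_modEq {n : ℕ} (hn : 4 ≤ n) :
    (4 : ℤ) ^ n - 4 * 3 ^ n + 6 * 2 ^ n - 4 ≡ -4 * 3 ^ n - 4 [ZMOD 32] := by
  obtain ⟨m, rfl⟩ := Nat.exists_eq_add_of_le' hn
  exact (Int.modEq_iff_dvd.2 ⟨8 * 4 ^ m + 3 * 2 ^ m, by ring⟩).symm

/-- The 2-adic valuation of `4^n - 4·3^n + 6·2^n - 4` (which is `24·S(n,4)` for the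
Stirling number of the second kind `S(n,4)`) equals `3` if `n` is even and `4` if `n`
is odd, for `n ≥ 4`. -/
theorem valuation_stirling_four (n : ℕ) (hn : 4 ≤ n) :
    (Even n → padicValInt 2 ((4 : ℤ) ^ n - 4 * 3 ^ n + 6 * 2 ^ n - 4) = 3) ∧
    (Odd n → padicValInt 2 ((4 : ℤ) ^ n - 4 * 3 ^ n + 6 * 2 ^ n - 4) = 4) := by
  have hmod := twentyFour_mul_stirling_four_modEq hn
  refine ⟨fun he ↦ ?_, fun ho ↦ ?_⟩
  · have h3 := Int.three_pow_modEq_one_of_even he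
    apply padicValInt_eq_of_modEq_prime_pow
    unfold Int.ModEq at *
    omega
  · have h3 := Int.three_pow_modEq_three_of_odd ho
    apply padicValInt_eq_of_modEq_prime_pow
    unfold Int.ModEq at *
    omega
end

section
/- Let p be a prime and let f be a nonzero polynomial in two variables with integer coefficients such that f(x,y) ≠ 0 for all x, y in the field ℚ_p of p-adic numbers. Then there exists a bound B such that for all integers m and n, f(m,n) ≠ 0 and the p-adic valuation of f(m,n) is at most B. -/
/-!
The polynomial has no zero on the compact set `ℤ_[p] ^ σ`, so the continuous function
`x ↦ ‖f x‖` is bounded below there by some `ε > 0`. Integer points lie in `ℤ_[p] ^ σ`, and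
for a nonzero integer `z` we have `‖z‖ = p ^ (-ν_p(z))`, so `ν_p(f(m))` is bounded in terms of `ε`.
-/

open MvPolynomial

theorem MvPolynomial.continuous_aeval {R S σ : Type*} [CommSemiring R] [CommSemiring S]
    [TopologicalSpace S] [IsTopologicalSemiring S] [Algebra R S] (f : MvPolynomial σ R) :
    Continuous fun x : σ → S ↦ aeval x f := by
  simpa only [aeval_def, eval₂_eq_eval_map] using continuous_eval (map (algebraMap R S) f)

theorem MvPolynomial.intCast_eval {R σ : Type*} [CommRing R] (f : MvPolynomial σ ℤ) (m : σ → ℤ) :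
    ((eval m f : ℤ) : R) = aeval (fun i ↦ (m i : R)) f :=
  (aeval_algebraMap_apply (B := R) m f).symm

theorem Continuous.exists_pos_le_norm {X E : Type*} [TopologicalSpace X] [CompactSpace X]
    [NormedAddCommGroup E] {g : X → E} (hg : Continuous g) (h : ∀ x, g x ≠ 0) :
    ∃ ε > 0, ∀ x, ε ≤ ‖g x‖ := by
  cases isEmpty_or_nonempty X with
  | inl _ => exact ⟨1, one_pos, isEmptyElim⟩
  | inr hX =>
    obtain ⟨x₀, -, hmin⟩ := isCompact_univ.exists_isMinOn Set.univ_nonempty hg.norm.continuousOn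
    exact ⟨‖g x₀‖, norm_pos_iff.2 (h x₀), fun x ↦ hmin (Set.mem_univ x)⟩

namespace PadicInt

variable {p : ℕ} [Fact p.Prime]

theorem exists_padicValInt_le_of_le_norm {ε : ℝ} (hε : 0 < ε) :
    ∃ B : ℕ, ∀ z : ℤ, ε ≤ ‖(z : ℤ_[p])‖ → z ≠ 0 ∧ padicValInt p z ≤ B := by
  have hp : (1 : ℝ) < p := by exact_mod_cast (Fact.out : p.Prime).one_lt
  obtain ⟨B, hB⟩ := exists_pow_lt_of_lt_one hε (inv_lt_one_of_one_lt₀ hp)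
  refine ⟨B, fun z hz ↦ ?_⟩
  have hz₀ : z ≠ 0 := by
    rintro rfl
    simp only [Int.cast_zero, norm_zero] at hz
    exact hz.not_gt hε
  refine ⟨hz₀, not_lt.1 fun hlt ↦ hz.not_gt ?_⟩
  have hdvd : (p ^ (B + 1) : ℤ) ∣ z := (padicValInt_dvd_iff _ _).2 (Or.inr hlt)
  calc ‖(z : ℤ_[p])‖ ≤ (p : ℝ) ^ (-(B + 1 : ℕ) : ℤ) := norm_int_le_pow_iff_dvd.2 hdvd
    _ = (p : ℝ)⁻¹ ^ (B + 1) := by rw [zpow_neg, zpow_natCast, inv_pow]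
    _ ≤ (p : ℝ)⁻¹ ^ B := pow_le_pow_of_le_one (by positivity) (inv_le_one_of_one_le₀ hp.le) B.le_succ
    _ < ε := hB

end PadicInt

theorem MvPolynomial.exists_padicValInt_eval_le {p : ℕ} [Fact p.Prime] {σ : Type*}
    (f : MvPolynomial σ ℤ) (hf : ∀ x : σ → ℤ_[p], aeval x f ≠ 0) :
    ∃ B : ℕ, ∀ m : σ → ℤ, eval m f ≠ 0 ∧ padicValInt p (eval m f) ≤ B := by
  obtain ⟨ε, hε, hεf⟩ := (continuous_aeval f).exists_pos_le_norm hf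
  obtain ⟨B, hB⟩ := PadicInt.exists_padicValInt_le_of_le_norm (p := p) hε
  exact ⟨B, fun m ↦ hB _ (by rw [intCast_eval]; exact hεf _)⟩

theorem valuation_bounded_of_no_padic_zero_general (p : ℕ) [Fact p.Prime]
    (f : MvPolynomial (Fin 2) ℤ)
    (hnozero : ∀ x y : ℚ_[p], MvPolynomial.aeval ![x, y] f ≠ 0) :
    ∃ B : ℕ, ∀ m n : ℤ,
      MvPolynomial.eval ![m, n] f ≠ 0 ∧
      padicValInt p (MvPolynomial.eval ![m, n] f) ≤ B := by
  have hf : ∀ x : Fin 2 → ℤ_[p], aeval x f ≠ 0 := fun x hx ↦ by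
    have hx' : ![(x 0 : ℚ_[p]), x 1] = algebraMap ℤ_[p] ℚ_[p] ∘ x := by
      ext i; fin_cases i <;> rfl
    exact hnozero (x 0) (x 1) (by rw [hx', aeval_algebraMap_apply, hx, map_zero])
  obtain ⟨B, hB⟩ := exists_padicValInt_eval_le f hf
  exact ⟨B, fun m n ↦ hB ![m, n]⟩

/-- The closed-form criterion: if a nonzero bivariate integer polynomial `f` has no
zero in `ℚ_p × ℚ_p`, then `f` does not vanish at integer points and the `p`-adic
valuations of its values on `ℤ × ℤ` are bounded. -/
theorem valuation_bounded_of_no_padic_zero (p : ℕ) [Fact p.Prime]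
    (f : MvPolynomial (Fin 2) ℤ) (hf : f ≠ 0)
    (hnozero : ∀ x y : ℚ_[p], MvPolynomial.aeval ![x, y] f ≠ 0) :
    ∃ B : ℕ, ∀ m n : ℤ,
      MvPolynomial.eval ![m, n] f ≠ 0 ∧
      padicValInt p (MvPolynomial.eval ![m, n] f) ≤ B :=
  valuation_bounded_of_no_padic_zero_general p f hnozero
end

section
/- Let f(x,y) = a20*x^2 + a11*x*y + a02*y^2 + a10*x + a01*y + a00 be a polynomial with integer coefficients, let k ≥ 1 be an integer, and let b, c be integers with 2^k ∣ f(b,c). Then the number of pairs (i,j) with i ∈ {0,1} and j ∈ {0,1} such that 2^(k+1) ∣ f(b + 2^k·i, c + 2^k·j) is equal to 0, 2, or 4. -/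
/-!
Write `f (b + 2^k i, c + 2^k j) = f(b,c) + 2^k (i A + j B) + 2^(2k) Q(i,j)` with `A`, `B` the partial
derivatives of `f` at `(b, c)`. Since `2k ≥ k + 1`, the child `(i, j)` is labelled `*` exactly when
the affine form `f(b,c)/2^k + i A + j B` is even, and an affine form on `𝔽₂²` vanishes at `0`, `2`
or `4` points.
-/

open Finset

theorem two_pow_succ_dvd_two_pow_mul_add_iff (k : ℕ) (m e : ℤ) :
    (2 : ℤ) ^ (k + 1) ∣ 2 ^ k * m + 2 ^ (k + 1) * e ↔ 2 ∣ m := by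
  rw [dvd_add_left (dvd_mul_right _ _), pow_succ, mul_dvd_mul_iff_left (by positivity)]

theorem card_filter_two_dvd_affine (m A B : ℤ) :
    #((range 2 ×ˢ range 2).filter fun ij : ℕ × ℕ => 2 ∣ m + ij.1 * A + ij.2 * B)
      ∈ ({0, 2, 4} : Finset ℕ) := by
  rw [card_filter, sum_product]
  simp only [sum_range_succ, sum_range_zero, Nat.cast_zero, Nat.cast_one]
  simp only [zero_mul, one_mul, add_zero, zero_add]
  split_ifs <;> simp <;> omega

theorem two_pow_succ_dvd_quadratic_shift_iff
    (a20 a11 a02 a10 a01 a00 : ℤ) (f : ℤ → ℤ → ℤ)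
    (hf : ∀ x y : ℤ, f x y =
      a20 * x ^ 2 + a11 * x * y + a02 * y ^ 2 + a10 * x + a01 * y + a00)
    {k : ℕ} (hk : 1 ≤ k) {b c m : ℤ} (hm : f b c = 2 ^ k * m) (i j : ℤ) :
    (2 : ℤ) ^ (k + 1) ∣ f (b + 2 ^ k * i) (c + 2 ^ k * j) ↔
      2 ∣ m + i * (2 * a20 * b + a11 * c + a10) + j * (a11 * b + 2 * a02 * c + a01) := by
  obtain ⟨n, rfl⟩ := Nat.exists_eq_add_of_le' hk
  have htaylor : f (b + 2 ^ (n + 1) * i) (c + 2 ^ (n + 1) * j) =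
      2 ^ (n + 1) * (m + i * (2 * a20 * b + a11 * c + a10) + j * (a11 * b + 2 * a02 * c + a01))
        + 2 ^ (n + 1 + 1) * (2 ^ n * (a20 * i ^ 2 + a11 * i * j + a02 * j ^ 2)) := by
    rw [hf] at hm ⊢
    linear_combination hm
  rw [htaylor, two_pow_succ_dvd_two_pow_mul_add_iff]

/-- The `p = 2` case of the degree-2 splitting theorem: the number of children of a
`*`-labelled vertex `(b, c)` of the 2-adic valuation tree of the general degree-2
bivariate polynomial that are again labelled `*` is `0`, `2`, or `4`. -/
theorem degree_two_splitting_two_adic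
    (a20 a11 a02 a10 a01 a00 : ℤ) (k : ℕ) (hk : 1 ≤ k) (b c : ℤ)
    (f : ℤ → ℤ → ℤ)
    (hf : ∀ x y : ℤ, f x y =
      a20 * x ^ 2 + a11 * x * y + a02 * y ^ 2 + a10 * x + a01 * y + a00)
    (hdiv : (2 : ℤ) ^ k ∣ f b c) :
    ((Finset.range 2 ×ˢ Finset.range 2).filter
        (fun ij : ℕ × ℕ =>
          (2 : ℤ) ^ (k + 1) ∣ f (b + (2 : ℤ) ^ k * ij.1) (c + (2 : ℤ) ^ k * ij.2))).card = 0 ∨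
    ((Finset.range 2 ×ˢ Finset.range 2).filter
        (fun ij : ℕ × ℕ =>
          (2 : ℤ) ^ (k + 1) ∣ f (b + (2 : ℤ) ^ k * ij.1) (c + (2 : ℤ) ^ k * ij.2))).card = 2 ∨
    ((Finset.range 2 ×ˢ Finset.range 2).filter
        (fun ij : ℕ × ℕ =>
          (2 : ℤ) ^ (k + 1) ∣ f (b + (2 : ℤ) ^ k * ij.1) (c + (2 : ℤ) ^ k * ij.2))).card = 4 := by
  obtain ⟨m, hm⟩ := hdiv
  rw [filter_congr fun ij _ =>
    two_pow_succ_dvd_quadratic_shift_iff a20 a11 a02 a10 a01 a00 f hf hk hm ij.1 ij.2]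
  simpa using card_filter_two_dvd_affine m _ _
end
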